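/- arXiv:1712.05431 — 3 statements merged into one kernel-verified Lean document; each statement's English description precedes it below -/
import Mathlib

section
/- For K ≥ 4, (2 + √K/2)^K − (1 − √K/2)^K ≤ (1 + √K)^K; conversely, for 1 ≤ K < 4 (i.e., K ∈ {1, 2, 3}), (1 + √K)^K ≤ (2 + √K/2)^K − (1 − √K/2)^K. -/
open Real

/-! Both regimes come from superadditivity `x ^ n + y ^ n ≤ (x + y) ^ n` of powers on `[0, ∞)`,
applied to the splitting `2 + √K/2 = (1 + √K) + (1 - √K/2)`. For `K < 4` the last summand is
positive, which gives `c₁ ≤ c₂` directly. For `K ≥ 4` it is nonpositive, and superadditivity is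
applied instead to `(2 + √K/2) + (√K/2 - 1) = 1 + √K`, with `-(1 - √K/2)^K ≤ (√K/2 - 1)^K`. -/

lemma pow_sub_pow_le_sub_pow_of_nonpos {a b : ℝ} (ha : 0 ≤ a) (hb : b ≤ 0) {n : ℕ} (hn : n ≠ 0) :
    a ^ n - b ^ n ≤ (a - b) ^ n := by
  have hsuper : a ^ n + (-b) ^ n ≤ (a - b) ^ n := by
    simpa only [sub_eq_add_neg] using pow_add_pow_le ha (neg_nonneg.mpr hb) hn
  have hneg : -b ^ n ≤ (-b) ^ n := by
    simpa only [abs_pow, abs_of_nonpos hb] using neg_le_abs (b ^ n)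
  linarith

lemma pow_le_add_pow_sub_pow {b c : ℝ} (hb : 0 ≤ b) (hc : 0 ≤ c) {n : ℕ} (hn : n ≠ 0) :
    b ^ n ≤ (b + c) ^ n - c ^ n :=
  le_sub_iff_add_le.mpr (pow_add_pow_le hb hc hn)

/-- Comparison of the integer-point-counting constants `c₁ = (1+√K)^K` and
`c₂ = (2+√K/2)^K − (1−√K/2)^K`: for `K ≥ 4`, `c₂ ≤ c₁`; for `1 ≤ K < 4`, `c₁ ≤ c₂`. -/
theorem c_max_comparison (K : ℕ) (hK : 1 ≤ K) :
    (4 ≤ K →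
      (2 + Real.sqrt K / 2) ^ K - (1 - Real.sqrt K / 2) ^ K ≤ (1 + Real.sqrt K) ^ K)
    ∧ (K < 4 →
      (1 + Real.sqrt K) ^ K ≤ (2 + Real.sqrt K / 2) ^ K - (1 - Real.sqrt K / 2) ^ K) := by
  have hK0 : K ≠ 0 := by omega
  constructor
  · intro hK4
    have hs : 2 ≤ √(K : ℝ) := (le_sqrt' two_pos).mpr (by exact_mod_cast hK4)
    have hdiff : 2 + √(K : ℝ) / 2 - (1 - √(K : ℝ) / 2) = 1 + √(K : ℝ) := by ring
    rw [← hdiff]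
    exact pow_sub_pow_le_sub_pow_of_nonpos (by positivity) (by linarith) hK0
  · intro hK4
    have hs : √(K : ℝ) < 2 := (sqrt_lt' two_pos).mpr (by exact_mod_cast hK4)
    have hsum : 1 + √(K : ℝ) + (1 - √(K : ℝ) / 2) = 2 + √(K : ℝ) / 2 := by ring
    rw [← hsum]
    exact pow_le_add_pow_sub_pow (by positivity) (by linarith) hK0
end

section
/- Let S be a K-dimensional diagonal positive semidefinite matrix, P ∈ ℝ^{K×K}, and A, A' two invertible integer matrices where A' is optimal for a second diagonal matrix S^Δ satisfying S ≼ η² S^Δ entrywise on the diagonal (s_i² ≤ η² s_{i,Δ}² for all i) with η ≥ 1. If R_IF(S, P; A) denotes K · max_k (1/2)log₂(a_kᵀ P(I+S)Pᵀ a_k), then the value at the optimal A for S satisfies R_IF^opt(S, P) ≤ R_IF^opt(S^Δ, P) + K log₂ η. -/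
/-!
Row by row, `a_kᵀ P (I + S) Pᵀ a_k = ∑ᵢ (a_kᵀ P)ᵢ² (1 + sᵢ)` is a nonnegative combination of the
weights `1 + sᵢ`. Since `1 + sᵢ ≤ η² (1 + s_{Δ,i})`, each row's rate for `S` exceeds the one for
`S^Δ` by at most `log₂ η`, so `R_IF(S, P; A) ≤ R_IF(S^Δ, P; A) + K log₂ η` for every `A`, and the
bound passes to the infima.
-/

open Matrix Real

/-- The IF sum rate for diagonal source covariance `diagonal s`, precoder `P`,
and integer matrix `A`: `K · max_k (1/2)log₂(a_kᵀ P (I + S) Pᵀ a_k)`, where `a_k`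
is the `k`-th row of `A`. -/
noncomputable def ifRate {K : ℕ} (s : Fin K → ℝ) (P : Matrix (Fin K) (Fin K) ℝ)
    (A : Matrix (Fin K) (Fin K) ℤ) : ℝ :=
  (K : ℝ) * ⨆ k : Fin K, (1 / 2 : ℝ) * Real.logb 2
    (((A.map (Int.cast : ℤ → ℝ)) * P * (1 + Matrix.diagonal s) * Pᵀ
      * (A.map (Int.cast : ℤ → ℝ))ᵀ) k k)

/-- The optimal IF sum rate: the infimum over full-rank integer matrices `A`. -/
noncomputable def ifRateOpt {K : ℕ} (s : Fin K → ℝ) (P : Matrix (Fin K) (Fin K) ℝ) : ℝ :=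
  sInf {r : ℝ | ∃ A : Matrix (Fin K) (Fin K) ℤ, A.det ≠ 0 ∧ r = ifRate s P A}

theorem Matrix.mul_diagonal_mul_transpose_apply_self {m n R : Type*} [Fintype n] [DecidableEq n]
    [CommSemiring R] (M : Matrix m n R) (d : n → R) (k : m) :
    (M * diagonal d * Mᵀ) k k = ∑ i, M k i ^ 2 * d i := by
  rw [mul_apply]
  exact Finset.sum_congr rfl fun i _ => by rw [mul_diagonal, transpose_apply]; ring

theorem Real.iSup_le_iSup_add {ι : Type*} [Finite ι] {f g : ι → ℝ} {c : ℝ} (hc : 0 ≤ c)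
    (h : ∀ i, f i ≤ g i + c) : ⨆ i, f i ≤ (⨆ i, g i) + c := by
  cases isEmpty_or_nonempty ι
  · simpa using hc
  · exact ciSup_le fun i => (h i).trans <|
      add_le_add_left (le_ciSup (Set.finite_range g).bddAbove i) c

theorem Real.sum_sq_mul_eq_zero_iff {ι : Type*} [Fintype ι] {w : ι → ℝ} (hw : ∀ i, 0 < w i)
    (v : ι → ℝ) : ∑ i, v i ^ 2 * w i = 0 ↔ v = 0 := by
  rw [Finset.sum_eq_zero_iff_of_nonneg fun i _ => mul_nonneg (sq_nonneg _) (hw i).le]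
  simp [(hw _).ne', funext_iff]

theorem Real.logb_sum_sq_mul_le {ι : Type*} [Fintype ι] {b c : ℝ} {v w w' : ι → ℝ} (hb : 1 < b)
    (hw : ∀ i, 0 < w i) (hc : 1 ≤ c) (h : ∀ i, w i ≤ c * w' i) :
    logb b (∑ i, v i ^ 2 * w i) ≤ logb b (∑ i, v i ^ 2 * w' i) + logb b c := by
  by_cases hv : v = 0
  · simpa [hv] using logb_nonneg hb hc
  have hpos : 0 < ∑ i, v i ^ 2 * w i :=
    (Finset.sum_nonneg fun i _ => mul_nonneg (sq_nonneg _) (hw i).le).lt_of_ne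
      (Ne.symm (mt (sum_sq_mul_eq_zero_iff hw v).mp hv))
  have hle : ∑ i, v i ^ 2 * w i ≤ c * ∑ i, v i ^ 2 * w' i := by
    rw [Finset.mul_sum]
    exact Finset.sum_le_sum fun i _ => by nlinarith [h i, sq_nonneg (v i)]
  have hpos' : 0 < ∑ i, v i ^ 2 * w' i := pos_of_mul_pos_right (hpos.trans_le hle) (by linarith)
  calc logb b (∑ i, v i ^ 2 * w i) ≤ logb b (c * ∑ i, v i ^ 2 * w' i) :=
        logb_le_logb_of_le hb hpos hle
    _ = logb b (∑ i, v i ^ 2 * w' i) + logb b c := by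
        rw [logb_mul (by positivity) hpos'.ne', add_comm]

theorem ifRate_eq_iSup_logb_sum {K : ℕ} (s : Fin K → ℝ) (P : Matrix (Fin K) (Fin K) ℝ)
    (A : Matrix (Fin K) (Fin K) ℤ) :
    ifRate s P A =
      K * ⨆ k, 1 / 2 * logb 2 (∑ i, (A.map (Int.cast : ℤ → ℝ) * P) k i ^ 2 * (1 + s i)) := by
  have hdiag : (1 + diagonal s : Matrix (Fin K) (Fin K) ℝ) = diagonal (fun i => 1 + s i) := by
    rw [← diagonal_one, diagonal_add]
  simp only [ifRate, hdiag, ← mul_diagonal_mul_transpose_apply_self, transpose_mul,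
    Matrix.mul_assoc]

theorem ifRate_le_ifRate_add_logb {K : ℕ} (P : Matrix (Fin K) (Fin K) ℝ) {s t : Fin K → ℝ}
    (hs : ∀ i, 0 < 1 + s i) {η : ℝ} (hη : 1 ≤ η) (h : ∀ i, 1 + s i ≤ η ^ 2 * (1 + t i))
    (A : Matrix (Fin K) (Fin K) ℤ) :
    ifRate s P A ≤ ifRate t P A + K * logb 2 η := by
  have hrow : ∀ v : Fin K → ℝ, 1 / 2 * logb 2 (∑ i, v i ^ 2 * (1 + s i))
      ≤ 1 / 2 * logb 2 (∑ i, v i ^ 2 * (1 + t i)) + logb 2 η := fun v => by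
    have := logb_sum_sq_mul_le (v := v) one_lt_two hs (one_le_pow₀ hη) h
    rw [logb_pow, Nat.cast_ofNat] at this
    linarith
  rw [ifRate_eq_iSup_logb_sum, ifRate_eq_iSup_logb_sum, ← mul_add]
  exact mul_le_mul_of_nonneg_left
    (iSup_le_iSup_add (logb_nonneg one_lt_two hη) fun k => hrow _) K.cast_nonneg

/-- `sInf` of a set of reals that is not bounded below is `0`; the reverse bound `hgf` makes both
sets bounded below or neither. -/
theorem Real.sInf_le_sInf_add {ι : Type*} {p : ι → Prop} {f g : ι → ℝ} {c d : ℝ}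
    (hp : ∃ i, p i) (hc : 0 ≤ c) (hfg : ∀ i, p i → f i ≤ g i + c)
    (hgf : ∀ i, p i → g i ≤ f i + d) :
    sInf {r | ∃ i, p i ∧ r = f i} ≤ sInf {r | ∃ i, p i ∧ r = g i} + c := by
  obtain ⟨i₀, hi₀⟩ := hp
  by_cases hbdd : BddBelow {r | ∃ i, p i ∧ r = f i}
  · rw [← sub_le_iff_le_add]
    refine le_csInf ⟨g i₀, i₀, hi₀, rfl⟩ ?_
    rintro _ ⟨i, hi, rfl⟩
    linarith [csInf_le hbdd ⟨i, hi, rfl⟩, hfg i hi]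
  · have hbdd' : ¬BddBelow {r | ∃ i, p i ∧ r = g i} := by
      rintro ⟨m, hm⟩
      refine hbdd ⟨m - d, ?_⟩
      rintro _ ⟨i, hi, rfl⟩
      linarith [hm ⟨i, hi, rfl⟩, hgf i hi]
    simpa [sInf_of_not_bddBelow hbdd, sInf_of_not_bddBelow hbdd'] using hc

theorem ifRateOpt_quantization_bound_general {K : ℕ}
    (P : Matrix (Fin K) (Fin K) ℝ)
    (s sΔ : Fin K → ℝ) (hs : ∀ i, 0 ≤ s i) (hsΔ : ∀ i, 0 ≤ sΔ i)
    (η : ℝ) (hη : 1 ≤ η)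
    (hdom : ∀ i, s i ≤ η ^ 2 * sΔ i) :
    ifRateOpt s P ≤ ifRateOpt sΔ P + (K : ℝ) * Real.logb 2 η := by
  have hforward : ∀ i, 1 + s i ≤ η ^ 2 * (1 + sΔ i) := fun i => by
    nlinarith [hdom i, one_le_pow₀ (n := 2) hη]
  set σ := 1 + ∑ j, sΔ j
  have hσ : 1 ≤ σ := le_add_of_nonneg_right (Finset.sum_nonneg fun j _ => hsΔ j)
  have hbackward : ∀ i, 1 + sΔ i ≤ σ ^ 2 * (1 + s i) := fun i => by
    have : sΔ i ≤ ∑ j, sΔ j := Finset.single_le_sum (fun j _ => hsΔ j) (Finset.mem_univ i)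
    nlinarith [hs i]
  exact sInf_le_sInf_add ⟨1, by simp⟩
    (mul_nonneg K.cast_nonneg (logb_nonneg one_lt_two hη))
    (fun A _ => ifRate_le_ifRate_add_logb P (fun i => by linarith [hs i]) hη hforward A)
    (fun A _ => ifRate_le_ifRate_add_logb P (fun i => by linarith [hsΔ i]) hσ hbackward A)

/-- If each diagonal variance satisfies `s i ≤ η² sΔ i` with `η ≥ 1`, then the optimal
IF rate for `S` is at most that for `S^Δ` plus `K log₂ η`. -/
theorem ifRateOpt_quantization_bound {K : ℕ} (hK : 0 < K)
    (P : Matrix (Fin K) (Fin K) ℝ)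
    (s sΔ : Fin K → ℝ) (hs : ∀ i, 0 ≤ s i) (hsΔ : ∀ i, 0 ≤ sΔ i)
    (η : ℝ) (hη : 1 ≤ η)
    (hdom : ∀ i, s i ≤ η ^ 2 * sΔ i) :
    ifRateOpt s P ≤ ifRateOpt sΔ P + (K : ℝ) * Real.logb 2 η :=
  ifRateOpt_quantization_bound_general P s sΔ hs hsΔ η hη hdom
end

section
/- For a positive definite matrix M = I + K_xx ∈ ℝ^{K×K} with Cholesky M = F Fᵀ, the integer-forcing rate (K/2)·log₂( min over invertible A ∈ ℤ^{K×K} of max_k a_kᵀ M a_k ) equals (K/2)·log₂( λ_K(Fᵀ)² ), where λ_K(Fᵀ) is the K-th successive minimum of the lattice spanned by Fᵀ. -/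
open Matrix Real

noncomputable def enorm {K : ℕ} (x : Fin K → ℝ) : ℝ := Real.sqrt (∑ i, (x i) ^ 2)

noncomputable def succMin {K : ℕ} (G : Matrix (Fin K) (Fin K) ℝ) (k : ℕ) : ℝ :=
  sInf {r : ℝ | 0 ≤ r ∧ k ≤ Module.finrank ℝ (Submodule.span ℝ
    {x : Fin K → ℝ | (∃ a : Fin K → ℤ, x = G.mulVec (fun i => (a i : ℝ))) ∧ _root_.enorm x ≤ r})}

/-! The rows `Fᵀ aₖ` of an invertible integer matrix `A` are `K` independent lattice vectors, and
conversely `K` independent lattice vectors `Fᵀ aₖ` of length at most `r` assemble into an integer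
matrix `A` that is invertible over `ℝ`. Hence `max_k ‖Fᵀ aₖ‖ ≤ r` for some invertible `A` exactly
when `r` bounds `K` independent lattice vectors, and taking infima gives `λ_K(Fᵀ)²`. -/

theorem sq_sInf_setOf_le_sq {S : Set ℝ} (hne : S.Nonempty) (hnonneg : ∀ s ∈ S, 0 ≤ s) :
    sInf {r : ℝ | 0 ≤ r ∧ ∃ s ∈ S, s ≤ r ^ 2} ^ 2 = sInf S := by
  set T := {r : ℝ | 0 ≤ r ∧ ∃ s ∈ S, s ≤ r ^ 2}
  have sqrt_mem : ∀ s ∈ S, √s ∈ T := fun s hs =>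
    ⟨Real.sqrt_nonneg s, s, hs, (Real.sq_sqrt (hnonneg s hs)).ge⟩
  have hTne : T.Nonempty := let ⟨s, hs⟩ := hne; ⟨√s, sqrt_mem s hs⟩
  have hT0 : 0 ≤ sInf T := le_csInf hTne fun r hr => hr.1
  have hS0 : 0 ≤ sInf S := le_csInf hne hnonneg
  apply le_antisymm
  · refine le_csInf hne fun s hs => ?_
    calc sInf T ^ 2 ≤ √s ^ 2 :=
          pow_le_pow_left₀ hT0 (csInf_le ⟨0, fun r hr => hr.1⟩ (sqrt_mem s hs)) 2
      _ = s := Real.sq_sqrt (hnonneg s hs)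
  · have : √(sInf S) ≤ sInf T := by
      refine le_csInf hTne fun r ⟨hr, s, hs, hsr⟩ => ?_
      calc √(sInf S) ≤ √(r ^ 2) := Real.sqrt_le_sqrt ((csInf_le ⟨0, hnonneg⟩ hs).trans hsr)
        _ = r := Real.sqrt_sq hr
    calc sInf S = √(sInf S) ^ 2 := (Real.sq_sqrt hS0).symm
      _ ≤ sInf T ^ 2 := pow_le_pow_left₀ (Real.sqrt_nonneg _) this 2

theorem iSup_sq_le_sq_iff {ι : Type*} [Finite ι] {f : ι → ℝ} (hf : ∀ i, 0 ≤ f i) {r : ℝ}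
    (hr : 0 ≤ r) : ⨆ i, f i ^ 2 ≤ r ^ 2 ↔ ∀ i, f i ≤ r := by
  refine ⟨fun h i => ?_, fun h => ?_⟩
  · refine (pow_le_pow_iff_left₀ (hf i) hr two_ne_zero).1 ?_
    exact (le_ciSup (Set.finite_range _).bddAbove i).trans h
  · exact Real.iSup_le (fun i => pow_le_pow_left₀ (hf i) (h i) 2) (sq_nonneg r)

theorem exists_linearIndependent_subset_of_le_finrank_span {V : Type*} [AddCommGroup V]
    [Module ℝ V] [FiniteDimensional ℝ V] {s : Set V} {n : ℕ}
    (h : n ≤ Module.finrank ℝ (Submodule.span ℝ s)) :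
    ∃ v : Fin n → V, (∀ i, v i ∈ s) ∧ LinearIndependent ℝ v := by
  obtain ⟨b, hbs, hspan, hli⟩ := exists_linearIndependent ℝ s
  have : Fintype b := hli.setFinite.fintype
  rw [← hspan, finrank_span_set_eq_card hli, Set.toFinset_card] at h
  obtain ⟨e⟩ : Nonempty (Fin n ↪ b) :=
    Function.Embedding.nonempty_of_card_le (by rwa [Fintype.card_fin])
  exact ⟨fun i => e i, fun i => hbs (e i).2, hli.comp e e.injective⟩

theorem enorm_sq {n : ℕ} (x : Fin n → ℝ) : _root_.enorm x ^ 2 = ∑ i, x i ^ 2 :=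
  Real.sq_sqrt (by positivity)

theorem enorm_nonneg {n : ℕ} (x : Fin n → ℝ) : 0 ≤ _root_.enorm x :=
  Real.sqrt_nonneg _

theorem mul_mul_transpose_mul_transpose_apply_self {m : Type*} {K n : ℕ}
    (B : Matrix m (Fin K) ℝ) (F : Matrix (Fin K) (Fin n) ℝ) (k : m) :
    (B * (F * Fᵀ) * Bᵀ) k k = _root_.enorm (Fᵀ *ᵥ B k) ^ 2 := by
  rw [enorm_sq, mulVec_transpose, ← Matrix.mul_assoc, Matrix.mul_assoc, ← transpose_mul,
    mul_apply]
  simp only [transpose_apply, mul_apply_eq_vecMul, sq]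

noncomputable section

namespace IntegerForcing

variable {K : ℕ}

def toReal (A : Matrix (Fin K) (Fin K) ℤ) : Matrix (Fin K) (Fin K) ℝ := A.map (Int.cast : ℤ → ℝ)

def latticeBall (G : Matrix (Fin K) (Fin K) ℝ) (r : ℝ) : Set (Fin K → ℝ) :=
  {x | (∃ a : Fin K → ℤ, x = G *ᵥ fun i => (a i : ℝ)) ∧ _root_.enorm x ≤ r}

def maxRowNormSq (G : Matrix (Fin K) (Fin K) ℝ) (A : Matrix (Fin K) (Fin K) ℤ) : ℝ :=
  ⨆ k, _root_.enorm (G *ᵥ toReal A k) ^ 2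

theorem linearIndependent_mulVec_toReal_iff {G : Matrix (Fin K) (Fin K) ℝ} (hG : IsUnit G)
    (A : Matrix (Fin K) (Fin K) ℤ) :
    LinearIndependent ℝ (fun k => G *ᵥ toReal A k) ↔ A.det ≠ 0 := by
  have hinj : Function.Injective G.mulVec := mulVec_injective_iff_isUnit.2 hG
  rw [show (fun k => G *ᵥ toReal A k) = G.mulVecLin ∘ (toReal A).row from rfl,
    LinearMap.linearIndependent_iff_of_injOn _ hinj.injOn, linearIndependent_rows_iff_isUnit,
    isUnit_iff_isUnit_det, isUnit_iff_ne_zero, toReal, ← Int.cast_det, Int.cast_ne_zero]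

theorem le_finrank_span_latticeBall_iff {G : Matrix (Fin K) (Fin K) ℝ} (hG : IsUnit G) (r : ℝ) :
    K ≤ Module.finrank ℝ (Submodule.span ℝ (latticeBall G r)) ↔
      ∃ A : Matrix (Fin K) (Fin K) ℤ, A.det ≠ 0 ∧ ∀ k, _root_.enorm (G *ᵥ toReal A k) ≤ r := by
  constructor
  · intro h
    obtain ⟨v, hv, hli⟩ := exists_linearIndependent_subset_of_le_finrank_span h
    choose a ha using fun k => (hv k).1
    have hrows : (fun k => G *ᵥ toReal (Matrix.of a) k) = v := funext fun k => (ha k).symm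
    refine ⟨Matrix.of a, (linearIndependent_mulVec_toReal_iff hG _).1 (hrows ▸ hli), fun k => ?_⟩
    rw [congrFun hrows k]
    exact (hv k).2
  · rintro ⟨A, hA, hle⟩
    have hli := (linearIndependent_mulVec_toReal_iff hG A).2 hA
    calc K = Module.finrank ℝ (Submodule.span ℝ (Set.range fun k => G *ᵥ toReal A k)) := by
          rw [finrank_span_eq_card hli, Fintype.card_fin]
      _ ≤ _ := Submodule.finrank_mono <| Submodule.span_mono <| Set.range_subset_iff.2
          fun k => And.intro ⟨A k, rfl⟩ (hle k)

theorem sq_succMin_eq_sInf_maxRowNormSq {G : Matrix (Fin K) (Fin K) ℝ} (hG : IsUnit G) :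
    succMin G K ^ 2 =
      sInf {s | ∃ A : Matrix (Fin K) (Fin K) ℤ, A.det ≠ 0 ∧ s = maxRowNormSq G A} := by
  set S := {s | ∃ A : Matrix (Fin K) (Fin K) ℤ, A.det ≠ 0 ∧ s = maxRowNormSq G A}
  have hT : {r : ℝ | 0 ≤ r ∧ K ≤ Module.finrank ℝ (Submodule.span ℝ (latticeBall G r))} =
      {r | 0 ≤ r ∧ ∃ s ∈ S, s ≤ r ^ 2} := by
    ext r
    refine and_congr_right fun hr => ?_
    have hmax (A : Matrix (Fin K) (Fin K) ℤ) :=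
      iSup_sq_le_sq_iff (fun k => enorm_nonneg (G *ᵥ toReal A k)) hr
    rw [le_finrank_span_latticeBall_iff hG]
    constructor
    · rintro ⟨A, hA, hle⟩
      exact ⟨_, ⟨A, hA, rfl⟩, (hmax A).2 hle⟩
    · rintro ⟨_, ⟨A, hA, rfl⟩, hle⟩
      exact ⟨A, hA, (hmax A).1 hle⟩
  have hS : S.Nonempty := ⟨_, 1, by simp, rfl⟩
  have hS0 : ∀ s ∈ S, 0 ≤ s := by
    rintro _ ⟨A, -, rfl⟩
    exact Real.iSup_nonneg fun _ => sq_nonneg _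
  rw [← sq_sInf_setOf_le_sq hS hS0, ← hT]
  rfl

end IntegerForcing

end

open IntegerForcing in
theorem if_rate_eq_succMin_general {K : ℕ}
    (Kxx F : Matrix (Fin K) (Fin K) ℝ) (hKxx : Kxx.PosSemidef)
    (hChol : (1 : Matrix (Fin K) (Fin K) ℝ) + Kxx = F * Fᵀ) :
    ((K : ℝ) / 2) * Real.logb 2
      (sInf {r : ℝ | ∃ A : Matrix (Fin K) (Fin K) ℤ, A.det ≠ 0 ∧
        r = ⨆ k : Fin K,
          (((A.map (Int.cast : ℤ → ℝ)) * (1 + Kxx) * (A.map (Int.cast : ℤ → ℝ))ᵀ) k k)})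
      = ((K : ℝ) / 2) * Real.logb 2 ((succMin Fᵀ K) ^ 2) := by
  have hFFt : IsUnit (F * Fᵀ) := hChol ▸ (PosDef.one.add_posSemidef hKxx).isUnit
  have hFt : IsUnit Fᵀ := by
    rw [isUnit_iff_isUnit_det, det_mul] at hFFt
    exact (isUnit_iff_isUnit_det _).2 (isUnit_of_mul_isUnit_right hFFt)
  rw [sq_succMin_eq_sInf_maxRowNormSq hFt, hChol]
  simp only [mul_mul_transpose_mul_transpose_apply_self]
  rfl

/-- The integer-forcing rate expressed via the `K`-th successive minimum: minimizing
over full-rank integer matrices `A` the maximum over rows of `a_kᵀ (I + Kxx) a_k`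
equals `λ_K(Fᵀ)²`, where `I + Kxx = F Fᵀ`. -/
theorem if_rate_eq_succMin {K : ℕ} (hK : 0 < K)
    (Kxx F : Matrix (Fin K) (Fin K) ℝ) (hKxx : Kxx.PosSemidef)
    (hChol : (1 : Matrix (Fin K) (Fin K) ℝ) + Kxx = F * Fᵀ) :
    ((K : ℝ) / 2) * Real.logb 2
      (sInf {r : ℝ | ∃ A : Matrix (Fin K) (Fin K) ℤ, A.det ≠ 0 ∧
        r = ⨆ k : Fin K,
          (((A.map (Int.cast : ℤ → ℝ)) * (1 + Kxx) * (A.map (Int.cast : ℤ → ℝ))ᵀ) k k)})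
      = ((K : ℝ) / 2) * Real.logb 2 ((succMin Fᵀ K) ^ 2) :=
  if_rate_eq_succMin_general Kxx F hKxx hChol
end
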